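/- Every irredundant set in a graph G is convexly independent; hence the maximum cardinality of an irredundant set is at most β_c(G). -/

import Mathlib

/-- A set `S` of vertices is P3-convex if every vertex outside `S`
has at most one neighbor in `S`. -/
def P3Convex {V : Type*} (G : SimpleGraph V) (S : Set V) : Prop :=
  ∀ x ∉ S, ({y | y ∈ S ∧ G.Adj x y} : Set V).Subsingleton

/-- The P3-convex hull of `A`: the intersection of all P3-convex sets containing `A`. -/
def p3Hull {V : Type*} (G : SimpleGraph V) (A : Set V) : Set V :=
  ⋂₀ {C : Set V | P3Convex G C ∧ A ⊆ C}

/-- A set `S` is convexly independent if no `x ∈ S` lies in the hull of `S \ {x}`. -/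
def ConvIndep {V : Type*} (G : SimpleGraph V) (S : Set V) : Prop :=
  ∀ x ∈ S, x ∉ p3Hull G (S \ {x})

/-- The maximum cardinality of a convexly independent set. -/
noncomputable def betaC {V : Type*} (G : SimpleGraph V) : ℕ :=
  sSup {n | ∃ S : Set V, ConvIndep G S ∧ S.ncard = n}

/-- A set `S` is irredundant if `∂(S) = σ(S) \ ⋃_{x ∈ S} σ(S \ {x})` is nonempty. -/
def Irredundant {V : Type*} (G : SimpleGraph V) (S : Set V) : Prop :=
  (p3Hull G S \ ⋃ x ∈ S, p3Hull G (S \ {x})).Nonempty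

/-! If `x ∈ σ(S \ {x})`, then the convex set `σ(S \ {x})` contains all of `S`, hence
`σ(S) ⊆ σ(S \ {x})` and `∂(S)` is empty. -/

section p3Hull

variable {V : Type*} (G : SimpleGraph V)

theorem subset_p3Hull (A : Set V) : A ⊆ p3Hull G A :=
  fun _ ha => Set.mem_sInter.2 fun _ hC => hC.2 ha

theorem p3Convex_p3Hull (A : Set V) : P3Convex G (p3Hull G A) := by
  intro x hx
  obtain ⟨C, hC, hxC⟩ : ∃ C ∈ {C : Set V | P3Convex G C ∧ A ⊆ C}, x ∉ C := by
    simpa only [p3Hull, Set.mem_sInter, not_forall, exists_prop] using hx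
  exact (hC.1 x hxC).anti fun y hy => ⟨Set.mem_sInter.1 hy.1 C hC, hy.2⟩

variable {G}

theorem p3Hull_subset_of_p3Convex {A C : Set V} (hC : P3Convex G C) (hAC : A ⊆ C) :
    p3Hull G A ⊆ C :=
  Set.sInter_subset_of_mem ⟨hC, hAC⟩

theorem p3Hull_subset_p3Hull_of_subset {A B : Set V} (h : A ⊆ p3Hull G B) :
    p3Hull G A ⊆ p3Hull G B :=
  p3Hull_subset_of_p3Convex (p3Convex_p3Hull G B) h

theorem p3Hull_subset_p3Hull_diff_singleton {S : Set V} {x : V}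
    (hx : x ∈ p3Hull G (S \ {x})) : p3Hull G S ⊆ p3Hull G (S \ {x}) := by
  refine p3Hull_subset_p3Hull_of_subset fun y hy => ?_
  obtain rfl | hyx := eq_or_ne y x
  · exact hx
  · exact subset_p3Hull G _ ⟨hy, hyx⟩

theorem Irredundant.convIndep {S : Set V} (hS : Irredundant G S) : ConvIndep G S := by
  intro x hxS hx
  obtain ⟨w, hwS, hw⟩ := hS
  exact hw (Set.mem_iUnion₂.2 ⟨x, hxS, p3Hull_subset_p3Hull_diff_singleton hx hwS⟩)

end p3Hull

theorem sSup_ncard_le_sSup_ncard {V : Type*} [Finite V] {P Q : Set V → Prop}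
    (hPQ : ∀ S, P S → Q S) :
    sSup {n | ∃ S : Set V, P S ∧ S.ncard = n} ≤ sSup {n | ∃ S : Set V, Q S ∧ S.ncard = n} := by
  refine csSup_le_csSup' ⟨Nat.card V, ?_⟩ ?_
  · rintro _ ⟨S, -, rfl⟩
    exact Set.ncard_le_card S
  · rintro _ ⟨S, hS, rfl⟩
    exact ⟨S, hPQ S hS, rfl⟩

theorem irredundant_le_betaC {V : Type*} [Fintype V] (G : SimpleGraph V) :
    (∀ S : Set V, Irredundant G S → ConvIndep G S) ∧
    sSup {n | ∃ S : Set V, Irredundant G S ∧ S.ncard = n} ≤ betaC G :=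
  ⟨fun _ hS => hS.convIndep, sSup_ncard_le_sSup_ncard fun _ hS => hS.convIndep⟩
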